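/- Assume f = (f_1,…,f_d) of class C² is a solution to the unconstrained auxiliary system, i.e. div[𝒜_i(y,∇f)∇f_i] = 0 in 𝔸ₙ for 1 ≤ i ≤ d. Then the whirl map u associated with the matrix field Q = Q[f] satisfies 𝓛[u;A,B] = ∇A + Bx − Σ_{i=1}^d A|∇f_i|² w^i, with A, B and their arguments evaluated at (r,s,ξ) = (‖y‖, ‖y‖², n + Σ_{j=1}^d y_j²|∇f_j|²). -/

import Mathlib

open scoped BigOperators
open Matrix

noncomputable section

/-- Partial derivative `∂g/∂x_j` of a scalar field on `ℝᵐ`. -/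
def pdx {m : ℕ} (g : (Fin m → ℝ) → ℝ) (x : Fin m → ℝ) (j : Fin m) : ℝ :=
  fderiv ℝ g x (Pi.single j 1)

/-- Gradient of a scalar field on `ℝᵐ`. -/
def gradx {m : ℕ} (g : (Fin m → ℝ) → ℝ) (x : Fin m → ℝ) : Fin m → ℝ :=
  fun j => pdx g x j

/-- Gradient matrix `∇u`, with entries `(∇u)_{ij} = ∂u_i/∂x_j`. -/
def gradm {n : ℕ} (u : (Fin n → ℝ) → Fin n → ℝ) (x : Fin n → ℝ) :
    Matrix (Fin n) (Fin n) ℝ :=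
  Matrix.of fun i j => pdx (fun z => u z i) x j

/-- Laplacian of a scalar field. -/
def lapx {m : ℕ} (g : (Fin m → ℝ) → ℝ) (x : Fin m → ℝ) : ℝ :=
  ∑ j, pdx (fun z => pdx g z j) x j

/-- Hessian matrix of a scalar field. -/
def hessx {m : ℕ} (g : (Fin m → ℝ) → ℝ) (x : Fin m → ℝ) : Matrix (Fin m) (Fin m) ℝ :=
  Matrix.of fun i j => pdx (fun z => pdx g z j) x i

/-- Componentwise Laplacian of a vector field. -/
def lapv {n : ℕ} (u : (Fin n → ℝ) → Fin n → ℝ) (x : Fin n → ℝ) : Fin n → ℝ :=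
  fun i => lapx (fun z => u z i) x

/-- Squared Euclidean norm of a vector. -/
def norm2 {m : ℕ} (v : Fin m → ℝ) : ℝ := ∑ i, v i ^ 2

/-- Euclidean norm of a vector. -/
def enr {m : ℕ} (v : Fin m → ℝ) : ℝ := Real.sqrt (norm2 v)

/-- Squared Frobenius norm of a matrix, `|E|² = tr (EᵗE)`. -/
def frob2 {n : ℕ} (M : Matrix (Fin n) (Fin n) ℝ) : ℝ := ∑ i, ∑ j, M i j ^ 2

/-- The 2-plane radial variables `y = (y_1, …, y_N)`, `N = ⌈n/2⌉` (0-indexed):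
`y_ℓ = √(x_{2ℓ}² + x_{2ℓ+1}²)` and, when `n` is odd, `y_{N-1} = x_{n-1}`. -/
def yvar {n : ℕ} (x : Fin n → ℝ) (ℓ : Fin ((n+1)/2)) : ℝ :=
  if h : 2 * (ℓ : ℕ) + 1 < n then
    Real.sqrt (x ⟨2*(ℓ:ℕ), by omega⟩ ^ 2 + x ⟨2*(ℓ:ℕ)+1, h⟩ ^ 2)
  else x ⟨n - 1, by have := ℓ.isLt; omega⟩

/-- The vector of 2-plane radial variables of `x`. -/
def yv {n : ℕ} (x : Fin n → ℝ) : Fin ((n+1)/2) → ℝ := fun ℓ => yvar x ℓ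

/-- Inclusion `Fin (n/2) → Fin ((n+1)/2)`, i.e. `d = ⌊n/2⌋` into `N = ⌈n/2⌉`. -/
def dIdx {n : ℕ} (i : Fin (n/2)) : Fin ((n+1)/2) := ⟨(i:ℕ), by have := i.isLt; omega⟩

/-- Partial derivative `∂_ℓ M` of a matrix field on `ℝᴺ`. -/
def pdM {n N : ℕ} (M : (Fin N → ℝ) → Matrix (Fin n) (Fin n) ℝ)
    (y : Fin N → ℝ) (ℓ : Fin N) : Matrix (Fin n) (Fin n) ℝ :=
  Matrix.of fun i j => pdx (fun z => M z i j) y ℓ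

/-- Second partial derivative `∂²_{ℓk} M` of a matrix field on `ℝᴺ`. -/
def pdM2 {n N : ℕ} (M : (Fin N → ℝ) → Matrix (Fin n) (Fin n) ℝ)
    (y : Fin N → ℝ) (ℓ k : Fin N) : Matrix (Fin n) (Fin n) ℝ :=
  Matrix.of fun i j => pdx (fun z => pdM M z ℓ i j) y k

/-- The block diagonal `SO(n)`-valued matrix field `Q[f]`, with `2×2` rotation blocks
`R[f_ℓ(y)]` (and an extra diagonal `1` when `n` is odd). -/
def Qf {n : ℕ} (f : (Fin ((n+1)/2) → ℝ) → Fin (n/2) → ℝ)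
    (y : Fin ((n+1)/2) → ℝ) : Matrix (Fin n) (Fin n) ℝ :=
  Matrix.of fun i j =>
    if h : (i:ℕ)/2 = (j:ℕ)/2 ∧ (i:ℕ)/2 < n/2 then
      (if (i:ℕ) % 2 = 0 then
        (if (j:ℕ) % 2 = 0 then Real.cos (f y ⟨(i:ℕ)/2, h.2⟩)
         else -Real.sin (f y ⟨(i:ℕ)/2, h.2⟩))
       else
        (if (j:ℕ) % 2 = 0 then Real.sin (f y ⟨(i:ℕ)/2, h.2⟩)
         else Real.cos (f y ⟨(i:ℕ)/2, h.2⟩)))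
    else (if i = j then 1 else 0)

/-- The block diagonal rotation matrix `exp(α𝐇) = diag(R[α], …, R[α])`
(an extra diagonal `1` when `n` is odd). -/
def rotM (n : ℕ) (α : ℝ) : Matrix (Fin n) (Fin n) ℝ :=
  Matrix.of fun i j =>
    if (i:ℕ)/2 = (j:ℕ)/2 ∧ (i:ℕ)/2 < n/2 then
      (if (i:ℕ) % 2 = 0 then
        (if (j:ℕ) % 2 = 0 then Real.cos α else -Real.sin α)
       else
        (if (j:ℕ) % 2 = 0 then Real.sin α else Real.cos α))
    else (if i = j then 1 else 0)

/-- The vector `w^k = (0, …, 0, x_{2k}, x_{2k+1}, 0, …, 0)`. -/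
def wv {n : ℕ} (x : Fin n → ℝ) (k : Fin ((n+1)/2)) : Fin n → ℝ :=
  fun j => if (j:ℕ)/2 = (k:ℕ) then x j else 0

/-- The vector `[w^k]^⊥ = (0, …, 0, -x_{2k+1}, x_{2k}, 0, …, 0)` (zero in the odd last slot). -/
def wperp {n : ℕ} (x : Fin n → ℝ) (k : Fin ((n+1)/2)) : Fin n → ℝ :=
  fun j =>
    if h : (j:ℕ)/2 = (k:ℕ) ∧ 2*(k:ℕ)+1 < n then
      (if (j:ℕ) % 2 = 0 then -x ⟨2*(k:ℕ)+1, h.2⟩ else x ⟨2*(k:ℕ), by omega⟩)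
    else 0

/-- The differential operator
`𝓛[u;A,B] = [∇u]ᵗ[∇u]∇A + A [∇u]ᵗΔu + B [∇u]ᵗu`, where `A, B` are evaluated at
`(|x|, |u|², |∇u|²)` and `∇A` is the spatial gradient of `x ↦ A(|x|,|u(x)|²,|∇u(x)|²)`. -/
def LAB {n : ℕ} (A B : ℝ → ℝ → ℝ → ℝ) (u : (Fin n → ℝ) → Fin n → ℝ)
    (x : Fin n → ℝ) : Fin n → ℝ :=
  ((gradm u x)ᵀ * gradm u x) *ᵥ
      gradx (fun z => A (enr z) (norm2 (u z)) (frob2 (gradm u z))) x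
    + A (enr x) (norm2 (u x)) (frob2 (gradm u x)) • ((gradm u x)ᵀ *ᵥ lapv u x)
    + B (enr x) (norm2 (u x)) (frob2 (gradm u x)) • ((gradm u x)ᵀ *ᵥ u x)

/-- The annulus `𝕏ₙ = {x : a < |x| < b}` in `ℝⁿ`. -/
def Xann (n : ℕ) (a b : ℝ) : Set (Fin n → ℝ) := {x | a < enr x ∧ enr x < b}

/-- The region `𝔸ₙ = {y : a < ‖y‖ < b}` (with the 2-plane radial coordinates positive). -/
def Ann (n : ℕ) (a b : ℝ) : Set (Fin ((n+1)/2) → ℝ) :=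
  {y | a < enr y ∧ enr y < b ∧ ∀ ℓ : Fin ((n+1)/2), 2*(ℓ:ℕ)+1 < n → 0 < y ℓ}

/-- `𝒥(y) = y_1 ⋯ y_d`. -/
def Jac (n : ℕ) (y : Fin ((n+1)/2) → ℝ) : ℝ :=
  ∏ ℓ : Fin ((n+1)/2), if 2*(ℓ:ℕ)+1 < n then y ℓ else 1

/-- The argument `ξ = n + Σ_j y_j² |∇f_j|²`. -/
def xiArg (n : ℕ) (f : (Fin ((n+1)/2) → ℝ) → Fin (n/2) → ℝ)
    (y : Fin ((n+1)/2) → ℝ) : ℝ :=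
  (n : ℝ) + ∑ j : Fin (n/2), (y (dIdx j))^2 * norm2 (gradx (fun z => f z j) y)

/-- The coefficients `𝒜_i(y,∇f) = y_i² A(z, z², n + Σ_j y_j²|∇f_j|²) 𝒥(y)`, `z = ‖y‖`. -/
def coefA (n : ℕ) (A : ℝ → ℝ → ℝ → ℝ) (f : (Fin ((n+1)/2) → ℝ) → Fin (n/2) → ℝ)
    (i : Fin (n/2)) (y : Fin ((n+1)/2) → ℝ) : ℝ :=
  (y (dIdx i))^2 * A (enr y) ((enr y)^2) (xiArg n f y) * Jac n y

/-- `div [𝒜_i(y,∇f) ∇f_i]`, divergence taken in the `y` variables. -/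
def divA (n : ℕ) (A : ℝ → ℝ → ℝ → ℝ) (f : (Fin ((n+1)/2) → ℝ) → Fin (n/2) → ℝ)
    (i : Fin (n/2)) (y : Fin ((n+1)/2) → ℝ) : ℝ :=
  ∑ k, pdx (fun z => coefA n A f i z * pdx (fun w => f w i) z k) y k

/-- The curl of a vector field, `[curl U]_{ij} = ∂_j U_i − ∂_i U_j`. -/
def curlm {n : ℕ} (U : (Fin n → ℝ) → Fin n → ℝ) (x : Fin n → ℝ) :
    Matrix (Fin n) (Fin n) ℝ :=
  Matrix.of fun i j => pdx (fun z => U z i) x j - pdx (fun z => U z j) x i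

end

/-!
Write `θ_ℓ = f_ℓ ∘ y` and `Q = Q[f]`, so that `u = Q x`. Differentiating the angle of a block of
`Q` rotates that block by a further quarter turn, hence `∇u = Q M` with
`M = I + Σ_ℓ w^ℓ_⊥ ⊗ ∇θ_ℓ`. In each block the two components of `u` have the form
`cos θ · x_p - sin θ · x_q` (the second one after shifting `θ` by `-π/2`), and the Laplacian of
such a function gives `Δu = Q Σ_ℓ (μ_ℓ w^ℓ_⊥ - |∇θ_ℓ|² w^ℓ)` with
`μ_ℓ = Δθ_ℓ + 2 ∂_ℓ f_ℓ / y_ℓ`. As `Q` is orthogonal,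
`𝓛[u;A,B] = Mᵀ (M ∇A + A Σ_ℓ (μ_ℓ w^ℓ_⊥ - |∇θ_ℓ|² w^ℓ) + B x)`.

The gradients `∇y_m` are orthonormal, and orthogonal to every `w^ℓ_⊥` because rotating a block
does not change `y`. So dot products of gradients of functions of `y` can be computed in `y`:
this gives `|∇u|² = |M|² = ξ` and `|∇θ_ℓ|² = |∇_y f_ℓ|²`, and, after expanding
`div[𝒜_ℓ ∇f_ℓ]`, turns the auxiliary system into `∇θ_ℓ · ∇A + A μ_ℓ = 0`. Thus the
`w^ℓ_⊥`-components cancel, the remaining vector `∇A + B x - Σ_ℓ A |∇_y f_ℓ|² w^ℓ` is orthogonal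
to every `w^ℓ_⊥`, and `Mᵀ` fixes it.
-/

noncomputable section

open Filter Topology

section GradientCalculus

variable {m : ℕ} {g h : (Fin m → ℝ) → ℝ} {c c' : Fin m → ℝ} {x : Fin m → ℝ}

def HasGradAt (g : (Fin m → ℝ) → ℝ) (c : Fin m → ℝ) (x : Fin m → ℝ) : Prop :=
  HasFDerivAt g (∑ k, c k • ContinuousLinearMap.proj k : (Fin m → ℝ) →L[ℝ] ℝ) x

theorem HasFDerivAt.hasGradAt {L : (Fin m → ℝ) →L[ℝ] ℝ} (hg : HasFDerivAt g L x)
    (hL : ∀ k, L (Pi.single k 1) = c k) : HasGradAt g c x := by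
  unfold HasGradAt
  convert hg using 1
  apply ContinuousLinearMap.coe_injective
  refine LinearMap.pi_ext fun i t => ?_
  have : Pi.single i t = t • (Pi.single i 1 : Fin m → ℝ) := by
    rw [← Pi.single_smul, smul_eq_mul, mul_one]
  simp [this, hL, Pi.single_apply]

theorem DifferentiableAt.hasGradAt (hg : DifferentiableAt ℝ g x) : HasGradAt g (gradx g x) x :=
  hg.hasFDerivAt.hasGradAt fun _ => rfl

theorem HasGradAt.pdx_eq (hg : HasGradAt g c x) (j : Fin m) : pdx g x j = c j := by
  rw [pdx, HasFDerivAt.fderiv hg]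
  simp [Pi.single_apply]

theorem HasGradAt.gradx_eq (hg : HasGradAt g c x) : gradx g x = c :=
  funext hg.pdx_eq

theorem HasGradAt.congr_grad (hg : HasGradAt g c x) (hc : c = c') : HasGradAt g c' x :=
  hc ▸ hg

theorem HasGradAt.congr_of_eventuallyEq (hg : HasGradAt g c x) (hgh : h =ᶠ[𝓝 x] g) :
    HasGradAt h c x :=
  HasFDerivAt.congr_of_eventuallyEq hg hgh

theorem hasGradAt_const (r : ℝ) (x : Fin m → ℝ) : HasGradAt (fun _ => r) 0 x :=
  (hasFDerivAt_const r x).hasGradAt fun _ => rfl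

theorem hasGradAt_apply (j : Fin m) (x : Fin m → ℝ) :
    HasGradAt (fun z => z j) (Pi.single j 1) x :=
  (ContinuousLinearMap.proj j).hasFDerivAt.hasGradAt fun k => by
    simp [Pi.single_apply, eq_comm]

theorem HasGradAt.add (hg : HasGradAt g c x) (hh : HasGradAt h c' x) :
    HasGradAt (fun z => g z + h z) (c + c') x :=
  (HasFDerivAt.add hg hh).hasGradAt fun k => by
    simp [Pi.single_apply]

theorem HasGradAt.sub (hg : HasGradAt g c x) (hh : HasGradAt h c' x) :
    HasGradAt (fun z => g z - h z) (c - c') x :=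
  (HasFDerivAt.sub hg hh).hasGradAt fun k => by
    simp [Pi.single_apply]

theorem HasGradAt.neg (hg : HasGradAt g c x) : HasGradAt (fun z => -g z) (-c) x :=
  (HasFDerivAt.neg hg).hasGradAt fun k => by
    simp [Pi.single_apply]

theorem HasGradAt.mul (hg : HasGradAt g c x) (hh : HasGradAt h c' x) :
    HasGradAt (fun z => g z * h z) (g x • c' + h x • c) x :=
  (HasFDerivAt.mul hg hh).hasGradAt fun k => by
    simp [Pi.single_apply]

theorem HasGradAt.sum {ι : Type*} (s : Finset ι) {G : ι → (Fin m → ℝ) → ℝ}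
    {C : ι → Fin m → ℝ} (hG : ∀ i ∈ s, HasGradAt (G i) (C i) x) :
    HasGradAt (fun z => ∑ i ∈ s, G i z) (∑ i ∈ s, C i) x :=
  (HasFDerivAt.fun_sum hG).hasGradAt fun k => by
    simp [Pi.single_apply, Finset.sum_apply]

theorem HasDerivAt.comp_hasGradAt {ψ : ℝ → ℝ} {d : ℝ} (hψ : HasDerivAt ψ d (g x))
    (hg : HasGradAt g c x) : HasGradAt (fun z => ψ (g z)) (d • c) x :=
  (hψ.comp_hasFDerivAt x hg).hasGradAt fun k => by
    simp [Pi.single_apply]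

theorem HasGradAt.comp {N : ℕ} {φ : (Fin N → ℝ) → ℝ} {Y : (Fin m → ℝ) → Fin N → ℝ}
    {a : Fin N → ℝ} {e : Fin N → Fin m → ℝ} (hφ : HasGradAt φ a (Y x))
    (hY : ∀ i, HasGradAt (fun z => Y z i) (e i) x) :
    HasGradAt (fun z => φ (Y z)) (∑ i, a i • e i) x := by
  have hY' : HasFDerivAt Y (ContinuousLinearMap.pi fun i => _) x := hasFDerivAt_pi.mpr hY
  refine (HasFDerivAt.comp x hφ hY').hasGradAt fun k => ?_
  simp [Pi.single_apply, Finset.sum_apply]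

theorem lapx_eq_of_hasGradAt {G : (Fin m → ℝ) → Fin m → ℝ} {H : Fin m → Fin m → ℝ}
    (hG : ∀ᶠ z in 𝓝 x, HasGradAt g (G z) z) (hH : ∀ j, HasGradAt (fun z => G z j) (H j) x) :
    lapx g x = ∑ j, H j j := by
  refine Finset.sum_congr rfl fun j _ => (hH j).congr_of_eventuallyEq ?_ |>.pdx_eq j
  filter_upwards [hG] with z hz using hz.pdx_eq j

theorem lapx_apply (j : Fin m) (x : Fin m → ℝ) : lapx (fun z => z j) x = 0 := by
  rw [lapx_eq_of_hasGradAt (Eventually.of_forall fun z => hasGradAt_apply j z)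
    fun _ => hasGradAt_const _ x]
  simp

theorem ContDiffAt.eventually_differentiableAt (hg : ContDiffAt ℝ 2 g x) :
    ∀ᶠ z in 𝓝 x, DifferentiableAt ℝ g z := by
  filter_upwards [hg.eventually (by simp)] with z hz using hz.differentiableAt (by simp)

theorem ContDiffAt.differentiableAt_pdx (hg : ContDiffAt ℝ 2 g x) (j : Fin m) :
    DifferentiableAt ℝ (fun z => pdx g z j) x :=
  ((hg.fderiv_right (m := 1) (by norm_num)).differentiableAt (by norm_num)).clm_apply
    (differentiableAt_const _)

theorem pdx_sub_const (g : (Fin m → ℝ) → ℝ) (r : ℝ) (x : Fin m → ℝ) (j : Fin m) :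
    pdx (fun z => g z - r) x j = pdx g x j := by
  rw [pdx, fderiv_sub_const, pdx]

theorem gradx_sub_const (g : (Fin m → ℝ) → ℝ) (r : ℝ) (x : Fin m → ℝ) :
    gradx (fun z => g z - r) x = gradx g x :=
  funext (pdx_sub_const g r x)

theorem lapx_sub_const (g : (Fin m → ℝ) → ℝ) (r : ℝ) (x : Fin m → ℝ) :
    lapx (fun z => g z - r) x = lapx g x := by
  simp only [lapx, pdx_sub_const]

end GradientCalculus

section RotatedCoordinate

open Real

variable {n : ℕ} {θ : (Fin n → ℝ) → ℝ} {c : Fin n → ℝ} {x : Fin n → ℝ}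

theorem hasGradAt_cos_mul_sub_sin_mul (hθ : HasGradAt θ c x) (p q : Fin n) :
    HasGradAt (fun z => cos (θ z) * z p - sin (θ z) * z q)
      (cos (θ x) • Pi.single p 1 - sin (θ x) • Pi.single q 1
        + (-sin (θ x) * x p - cos (θ x) * x q) • c) x := by
  refine ((((hasDerivAt_cos _).comp_hasGradAt hθ).mul (hasGradAt_apply p x)).sub
    (((hasDerivAt_sin _).comp_hasGradAt hθ).mul (hasGradAt_apply q x))).congr_grad ?_
  funext k
  simp only [Pi.add_apply, Pi.sub_apply, Pi.smul_apply, smul_eq_mul]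
  ring

theorem lapx_cos_mul_sub_sin_mul (hθ : ContDiffAt ℝ 2 θ x) (p q : Fin n) :
    lapx (fun z => cos (θ z) * z p - sin (θ z) * z q) x
      = (-sin (θ x) * x p - cos (θ x) * x q) * lapx θ x
        - (cos (θ x) * x p - sin (θ x) * x q) * (gradx θ x ⬝ᵥ gradx θ x)
        - 2 * (sin (θ x) * pdx θ x p + cos (θ x) * pdx θ x q) := by
  set σ : (Fin n → ℝ) → ℝ := fun z => -(sin (θ z) * z p) - cos (θ z) * z q with hσ_def
  have hG : ∀ᶠ z in 𝓝 x, HasGradAt (fun z => cos (θ z) * z p - sin (θ z) * z q)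
      (fun j => cos (θ z) * (Pi.single p 1 : Fin n → ℝ) j
        - sin (θ z) * (Pi.single q 1 : Fin n → ℝ) j
        + σ z * pdx θ z j) z :=
    hθ.eventually_differentiableAt.mono fun z hz =>
      (hasGradAt_cos_mul_sub_sin_mul hz.hasGradAt p q).congr_grad (funext fun j => by
        simp [hσ_def, gradx])
  have hθ1 := hθ.differentiableAt (by norm_num) |>.hasGradAt
  have hcos := (hasDerivAt_cos (θ x)).comp_hasGradAt hθ1
  have hsin := (hasDerivAt_sin (θ x)).comp_hasGradAt hθ1
  have hσ : HasGradAt σ _ x :=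
    ((hsin.mul (hasGradAt_apply p x)).neg).sub (hcos.mul (hasGradAt_apply q x))
  rw [lapx_eq_of_hasGradAt hG fun j =>
    ((hcos.mul (hasGradAt_const _ x)).sub (hsin.mul (hasGradAt_const _ x))).add
      (hσ.mul (hθ.differentiableAt_pdx j).hasGradAt)]
  simp only [hσ_def, Pi.add_apply, Pi.sub_apply, Pi.neg_apply, Pi.smul_apply, smul_eq_mul,
    Pi.zero_apply, dotProduct, gradx, lapx]
  simp [Finset.sum_add_distrib, Finset.sum_sub_distrib, mul_add, mul_sub, Finset.mul_sum,
    Pi.single_apply]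
  ring_nf
  rw [Finset.sum_add_distrib, Finset.sum_neg_distrib]
  ring

end RotatedCoordinate

section MatrixIdentities

variable {n : ℕ} {ι : Type*} [Fintype ι]

theorem one_add_sum_vecMulVec_mulVec (p V : ι → Fin n → ℝ) (g : Fin n → ℝ) :
    (1 + ∑ ℓ, vecMulVec (p ℓ) (V ℓ)) *ᵥ g = g + ∑ ℓ, (V ℓ ⬝ᵥ g) • p ℓ := by
  simp [add_mulVec, sum_mulVec, vecMulVec_mulVec]

theorem one_add_sum_vecMulVec_transpose_mulVec (p V : ι → Fin n → ℝ) (r : Fin n → ℝ) :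
    (1 + ∑ ℓ, vecMulVec (p ℓ) (V ℓ))ᵀ *ᵥ r = r + ∑ ℓ, (p ℓ ⬝ᵥ r) • V ℓ := by
  simp [transpose_add, transpose_sum, transpose_vecMulVec, add_mulVec, sum_mulVec,
    vecMulVec_mulVec]

theorem transpose_mul_mulVec_of_transpose_mul_self {Q : Matrix (Fin n) (Fin n) ℝ}
    (hQ : Qᵀ * Q = 1) (M : Matrix (Fin n) (Fin n) ℝ) (g L v : Fin n → ℝ) (α β : ℝ) :
    ((Q * M)ᵀ * (Q * M)) *ᵥ g + α • ((Q * M)ᵀ *ᵥ (Q *ᵥ L)) + β • ((Q * M)ᵀ *ᵥ (Q *ᵥ v))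
      = Mᵀ *ᵥ (M *ᵥ g + α • L + β • v) := by
  have hQ' : ∀ w, (Q * M)ᵀ *ᵥ (Q *ᵥ w) = Mᵀ *ᵥ w := fun w => by
    rw [mulVec_mulVec, transpose_mul, Matrix.mul_assoc, hQ, Matrix.mul_one]
  rw [← mulVec_mulVec, ← mulVec_mulVec, hQ', hQ', hQ', mulVec_add, mulVec_add, mulVec_smul,
    mulVec_smul]

theorem norm2_mulVec_of_transpose_mul_self {Q : Matrix (Fin n) (Fin n) ℝ} (hQ : Qᵀ * Q = 1)
    (v : Fin n → ℝ) : norm2 (Q *ᵥ v) = norm2 v := by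
  have h : ∀ w : Fin n → ℝ, norm2 w = w ⬝ᵥ w := fun w => by simp [norm2, dotProduct, pow_two]
  rw [h, h, dotProduct_mulVec, ← mulVec_transpose, mulVec_mulVec, hQ, one_mulVec]

theorem frob2_eq_trace (M : Matrix (Fin n) (Fin n) ℝ) : frob2 M = trace (Mᵀ * M) := by
  simp only [frob2, trace, diag, mul_apply, transpose_apply, ← pow_two]
  exact Finset.sum_comm

theorem frob2_mul_of_transpose_mul_self {Q : Matrix (Fin n) (Fin n) ℝ} (hQ : Qᵀ * Q = 1)
    (M : Matrix (Fin n) (Fin n) ℝ) : frob2 (Q * M) = frob2 M := by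
  rw [frob2_eq_trace, frob2_eq_trace, transpose_mul, Matrix.mul_assoc, ← Matrix.mul_assoc Qᵀ,
    hQ, Matrix.one_mul]

theorem frob2_one_add_sum_vecMulVec (p V : ι → Fin n → ℝ) (hpV : ∀ ℓ, p ℓ ⬝ᵥ V ℓ = 0)
    (hpp : Pairwise fun ℓ ℓ' => p ℓ ⬝ᵥ p ℓ' = 0) :
    frob2 (1 + ∑ ℓ, vecMulVec (p ℓ) (V ℓ)) = n + ∑ ℓ, (p ℓ ⬝ᵥ p ℓ) * (V ℓ ⬝ᵥ V ℓ) := by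
  rw [frob2_eq_trace]
  simp only [transpose_add, transpose_one, transpose_sum, transpose_vecMulVec, add_mul, mul_add,
    Matrix.one_mul, Matrix.mul_one, Finset.sum_mul, Finset.mul_sum, vecMulVec_mul_vecMulVec,
    trace_add, trace_sum, trace_vecMulVec, trace_one, Fintype.card_fin, dotProduct_smul,
    smul_eq_mul]
  have hpV' : ∀ ℓ, V ℓ ⬝ᵥ p ℓ = 0 := fun ℓ => by rw [dotProduct_comm, hpV]
  simp only [hpV, hpV', Finset.sum_const_zero, add_zero, zero_add]
  congr 1
  refine Finset.sum_congr rfl fun ℓ _ => ?_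
  rw [Finset.sum_eq_single ℓ (fun ℓ' _ h => by rw [hpp h, zero_mul]) (by simp)]

end MatrixIdentities

section BlockIndices

variable {n : ℕ}

def blockFst (ℓ : Fin (n/2)) : Fin n := ⟨2 * ℓ, by omega⟩

def blockSnd (ℓ : Fin (n/2)) : Fin n := ⟨2 * ℓ + 1, by omega⟩

theorem two_mul_add_one_lt (ℓ : Fin (n/2)) : 2 * (ℓ : ℕ) + 1 < n := by
  have := ℓ.isLt; omega

theorem two_mul_dIdx_add_one_lt (ℓ : Fin (n/2)) : 2 * (dIdx ℓ : ℕ) + 1 < n :=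
  two_mul_add_one_lt ℓ

@[simp] theorem blockFst_inj {ℓ ℓ' : Fin (n/2)} : blockFst ℓ = blockFst ℓ' ↔ ℓ = ℓ' := by
  simp [blockFst, Fin.ext_iff]

@[simp] theorem blockSnd_inj {ℓ ℓ' : Fin (n/2)} : blockSnd ℓ = blockSnd ℓ' ↔ ℓ = ℓ' := by
  simp [blockSnd, Fin.ext_iff]

@[simp] theorem blockFst_ne_blockSnd (ℓ ℓ' : Fin (n/2)) : blockFst ℓ ≠ blockSnd ℓ' := by
  simp [blockFst, blockSnd, Fin.ext_iff]; omega

theorem block_cases (i : Fin n) :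
    (∃ ℓ, i = blockFst ℓ) ∨ (∃ ℓ, i = blockSnd ℓ) ∨ 2 * (n/2) ≤ (i : ℕ) := by
  by_cases hi : (i : ℕ) < 2 * (n/2)
  · rcases Nat.even_or_odd (i : ℕ) with ⟨t, ht⟩ | ⟨t, ht⟩
    · exact Or.inl ⟨⟨t, by omega⟩, Fin.ext (by simp [blockFst]; omega)⟩
    · exact Or.inr (Or.inl ⟨⟨t, by omega⟩, Fin.ext (by simp [blockSnd]; omega)⟩)
  · exact Or.inr (Or.inr (by omega))

theorem ne_blockFst_of_le {i : Fin n} (hi : 2 * (n/2) ≤ (i : ℕ)) (ℓ : Fin (n/2)) :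
    i ≠ blockFst ℓ := by
  simp only [ne_eq, Fin.ext_iff, blockFst]; omega

theorem ne_blockSnd_of_le {i : Fin n} (hi : 2 * (n/2) ≤ (i : ℕ)) (ℓ : Fin (n/2)) :
    i ≠ blockSnd ℓ := by
  simp only [ne_eq, Fin.ext_iff, blockSnd]; omega

theorem dIdx_injective : Function.Injective (dIdx : Fin (n/2) → Fin ((n+1)/2)) :=
  fun ℓ ℓ' h => Fin.ext (by simpa [dIdx] using congrArg Fin.val h)

@[simp] theorem dIdx_inj {ℓ ℓ' : Fin (n/2)} : dIdx ℓ = dIdx ℓ' ↔ ℓ = ℓ' :=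
  dIdx_injective.eq_iff

/-- The last coordinate; it carries a radial variable only for odd `n`, as `y_N = x_n`. -/
def lastIdx (m : Fin ((n+1)/2)) : Fin n := ⟨n - 1, by have := m.isLt; omega⟩

theorem sum_ite_div_two_eq {M : Type*} [AddCommMonoid M] (F : Fin n → M)
    (m : Fin ((n+1)/2)) :
    ∑ j : Fin n, (if (j : ℕ)/2 = m then F j else 0)
      = if h : 2 * (m : ℕ) + 1 < n then F ⟨2 * m, by omega⟩ + F ⟨2 * m + 1, h⟩
        else F (lastIdx m) := by
  split_ifs with h
  · rw [Finset.sum_eq_add_of_mem ⟨2 * m, by omega⟩ ⟨2 * m + 1, h⟩ (Finset.mem_univ _)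
      (Finset.mem_univ _) (by simp [Fin.ext_iff])]
    · rw [if_pos (show 2 * (m : ℕ) / 2 = m by omega),
        if_pos (show (2 * (m : ℕ) + 1) / 2 = m by omega)]
    · intro j _ hj
      rw [if_neg]
      simp only [ne_eq, Fin.ext_iff] at hj
      omega
  · rw [Finset.sum_eq_single (lastIdx m)]
    · exact if_pos (show (n - 1) / 2 = (m : ℕ) by omega)
    · intro j _ hj
      rw [if_neg]
      simp only [ne_eq, Fin.ext_iff, lastIdx] at hj
      omega
    · simp

theorem dotProduct_eq_of_block_support {m : Fin ((n+1)/2)} {v : Fin n → ℝ}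
    (hv : ∀ j : Fin n, (j : ℕ)/2 ≠ m → v j = 0) (w : Fin n → ℝ) :
    v ⬝ᵥ w = if h : 2 * (m : ℕ) + 1 < n
      then v ⟨2 * m, by omega⟩ * w ⟨2 * m, by omega⟩ + v ⟨2 * m + 1, h⟩ * w ⟨2 * m + 1, h⟩
      else v (lastIdx m) * w (lastIdx m) := by
  rw [← sum_ite_div_two_eq (fun j => v j * w j)]
  refine Finset.sum_congr rfl fun j _ => ?_
  split_ifs with hj
  · rfl
  · rw [hv j hj, zero_mul]

theorem dotProduct_eq_zero_of_block_support {m m' : Fin ((n+1)/2)} {v w : Fin n → ℝ}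
    (hv : ∀ j : Fin n, (j : ℕ)/2 ≠ m → v j = 0) (hw : ∀ j : Fin n, (j : ℕ)/2 ≠ m' → w j = 0)
    (hmm' : m ≠ m') : v ⬝ᵥ w = 0 := by
  refine Finset.sum_eq_zero fun j _ => ?_
  by_cases hj : (j : ℕ)/2 = m
  · rw [hw j (fun h => hmm' (Fin.ext (hj.symm.trans h))), mul_zero]
  · rw [hv j hj, zero_mul]

theorem wv_of_ne {x : Fin n → ℝ} {m : Fin ((n+1)/2)} {j : Fin n} (hj : (j : ℕ)/2 ≠ m) :
    wv x m j = 0 :=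
  if_neg hj

theorem wperp_of_ne {x : Fin n → ℝ} {m : Fin ((n+1)/2)} {j : Fin n} (hj : (j : ℕ)/2 ≠ m) :
    wperp x m j = 0 :=
  dif_neg fun h => hj h.1

theorem wv_blockFst (x : Fin n → ℝ) (m : Fin ((n+1)/2)) (ℓ : Fin (n/2)) :
    wv x m (blockFst ℓ) = if m = dIdx ℓ then x (blockFst ℓ) else 0 := by
  simp [wv, blockFst, dIdx, Fin.ext_iff, eq_comm]

theorem wv_blockSnd (x : Fin n → ℝ) (m : Fin ((n+1)/2)) (ℓ : Fin (n/2)) :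
    wv x m (blockSnd ℓ) = if m = dIdx ℓ then x (blockSnd ℓ) else 0 := by
  have e : (2 * (ℓ : ℕ) + 1) / 2 = ℓ := by omega
  simp [wv, blockSnd, dIdx, Fin.ext_iff, eq_comm, e]

theorem wv_dIdx_of_le (x : Fin n → ℝ) (ℓ : Fin (n/2)) {i : Fin n} (hi : 2 * (n/2) ≤ (i : ℕ)) :
    wv x (dIdx ℓ) i = 0 :=
  wv_of_ne (by simp [dIdx]; omega)

theorem wperp_blockFst (x : Fin n → ℝ) (m : Fin ((n+1)/2)) (ℓ : Fin (n/2)) :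
    wperp x m (blockFst ℓ) = if m = dIdx ℓ then -x (blockSnd ℓ) else 0 := by
  by_cases h : m = dIdx ℓ
  · subst h
    simp [wperp, blockFst, blockSnd, dIdx, two_mul_add_one_lt]
  · rw [if_neg h, wperp_of_ne]
    simpa [blockFst, dIdx, Fin.ext_iff, eq_comm] using h

theorem wperp_blockSnd (x : Fin n → ℝ) (m : Fin ((n+1)/2)) (ℓ : Fin (n/2)) :
    wperp x m (blockSnd ℓ) = if m = dIdx ℓ then x (blockFst ℓ) else 0 := by
  have e : (2 * (ℓ : ℕ) + 1) / 2 = ℓ := by omega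
  by_cases h : m = dIdx ℓ
  · subst h
    simp [wperp, blockFst, blockSnd, dIdx, e, two_mul_add_one_lt]
  · rw [if_neg h, wperp_of_ne]
    simpa [blockSnd, dIdx, Fin.ext_iff, eq_comm, e] using h

theorem wperp_of_le (x : Fin n → ℝ) (m : Fin ((n+1)/2)) {i : Fin n}
    (hi : 2 * (n/2) ≤ (i : ℕ)) : wperp x m i = 0 :=
  dif_neg fun h => by omega

end BlockIndices

section RadialVariables

variable {n : ℕ}

def PlanarPos (n : ℕ) (y : Fin ((n+1)/2) → ℝ) : Prop :=
  ∀ m : Fin ((n+1)/2), 2 * (m : ℕ) + 1 < n → 0 < y m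

theorem yvar_of_lt {x : Fin n → ℝ} {m : Fin ((n+1)/2)} (h : 2 * (m : ℕ) + 1 < n) :
    yvar x m = √(x ⟨2 * m, by omega⟩ ^ 2 + x ⟨2 * m + 1, h⟩ ^ 2) :=
  dif_pos h

theorem yvar_of_not_lt {x : Fin n → ℝ} {m : Fin ((n+1)/2)} (h : ¬ 2 * (m : ℕ) + 1 < n) :
    yvar x m = x (lastIdx m) :=
  dif_neg h

theorem sq_yvar {x : Fin n → ℝ} {m : Fin ((n+1)/2)} (h : 2 * (m : ℕ) + 1 < n) :
    yvar x m ^ 2 = x ⟨2 * m, by omega⟩ ^ 2 + x ⟨2 * m + 1, h⟩ ^ 2 := by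
  rw [yvar_of_lt h, Real.sq_sqrt (by positivity)]

theorem wv_dotProduct_wv (x : Fin n → ℝ) (m m' : Fin ((n+1)/2)) :
    wv x m ⬝ᵥ wv x m' = if m = m' then yvar x m ^ 2 else 0 := by
  split_ifs with hmm'
  · subst hmm'
    rw [dotProduct_eq_of_block_support (fun j => wv_of_ne)]
    split_ifs with h
    · have h1 : (2 * (m : ℕ) + 1) / 2 = m := by omega
      rw [sq_yvar h]; simp [wv, pow_two, h1]
    · have h1 : (n - 1) / 2 = (m : ℕ) := by have := m.isLt; omega
      rw [yvar_of_not_lt h]; simp [wv, lastIdx, pow_two, h1]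
  · exact dotProduct_eq_zero_of_block_support (fun j => wv_of_ne) (fun j => wv_of_ne) hmm'

theorem wperp_dotProduct_wv (x : Fin n → ℝ) (k m : Fin ((n+1)/2)) :
    wperp x k ⬝ᵥ wv x m = 0 := by
  by_cases hkm : k = m
  · subst hkm
    rw [dotProduct_eq_of_block_support (fun j => wperp_of_ne)]
    split_ifs with h
    · have h1 : (2 * (k : ℕ) + 1) / 2 = k := by omega
      simp [wperp, wv, h1, h]
      ring
    · simp [wperp, h]
  · exact dotProduct_eq_zero_of_block_support (fun j => wperp_of_ne) (fun j => wv_of_ne) hkm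

theorem wperp_dotProduct_wperp (x : Fin n → ℝ) (k k' : Fin ((n+1)/2))
    (hk : 2 * (k : ℕ) + 1 < n) :
    wperp x k ⬝ᵥ wperp x k' = if k = k' then yvar x k ^ 2 else 0 := by
  split_ifs with hkk'
  · subst hkk'
    rw [dotProduct_eq_of_block_support (fun j => wperp_of_ne), dif_pos hk, sq_yvar hk]
    have h1 : (2 * (k : ℕ) + 1) / 2 = k := by omega
    simp [wperp, h1, hk]
    ring
  · exact dotProduct_eq_zero_of_block_support (fun j => wperp_of_ne) (fun j => wperp_of_ne) hkk'

theorem sum_wv (x : Fin n → ℝ) : ∑ m, wv x m = x := by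
  funext j
  rw [Finset.sum_apply, Finset.sum_eq_single (⟨(j : ℕ)/2, by omega⟩ : Fin ((n+1)/2))]
  · simp [wv]
  · intro m _ hm
    exact wv_of_ne fun h => hm (Fin.ext h.symm)
  · simp

theorem wperp_dotProduct_self (x : Fin n → ℝ) (k : Fin ((n+1)/2)) : wperp x k ⬝ᵥ x = 0 := by
  calc wperp x k ⬝ᵥ x = wperp x k ⬝ᵥ ∑ m, wv x m := by rw [sum_wv]
    _ = 0 := by simp [dotProduct_sum, wperp_dotProduct_wv]

theorem norm2_yv (x : Fin n → ℝ) : norm2 (yv x) = norm2 x := by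
  have h : ∀ {k : ℕ} (w : Fin k → ℝ), norm2 w = w ⬝ᵥ w := fun w => by
    simp [norm2, dotProduct, pow_two]
  conv_rhs => rw [h, ← sum_wv x]
  simp [sum_dotProduct, dotProduct_sum, wv_dotProduct_wv, norm2, yv]

theorem enr_yv (x : Fin n → ℝ) : enr (yv x) = enr x := by
  rw [enr, enr, norm2_yv]

theorem continuous_yvar (m : Fin ((n+1)/2)) : Continuous fun x : Fin n → ℝ => yvar x m := by
  by_cases h : 2 * (m : ℕ) + 1 < n
  · simp only [yvar_of_lt h]
    fun_prop
  · simp only [yvar_of_not_lt h]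
    fun_prop

theorem continuous_yv : Continuous fun x : Fin n → ℝ => yv x :=
  continuous_pi continuous_yvar

theorem contDiffAt_yv {x : Fin n → ℝ} (hx : PlanarPos n (yv x)) {k : WithTop ℕ∞} :
    ContDiffAt ℝ k (fun z => yv z) x := by
  refine contDiffAt_pi.2 fun m => ?_
  by_cases h : 2 * (m : ℕ) + 1 < n
  · simp only [yv, yvar_of_lt h]
    refine ContDiffAt.sqrt (by fun_prop) ?_
    rw [← sq_yvar h]
    exact (pow_pos (hx m h) 2).ne'
  · simp only [yv, yvar_of_not_lt h]
    fun_prop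

theorem eventually_yvar_pos {x : Fin n → ℝ} (hx : PlanarPos n (yv x)) :
    ∀ᶠ z in 𝓝 x, PlanarPos n (yv z) :=
  eventually_all.2 fun m => by
    by_cases h : 2 * (m : ℕ) + 1 < n
    · filter_upwards [continuousAt_const.eventually_lt (continuous_yvar m).continuousAt (hx m h)]
        with z hz using fun _ => hz
    · exact Eventually.of_forall fun _ h' => absurd h' h

/-- `∇y_m`; for a planar radius `y_m` (`2m+1 < n`) it is only meaningful where `y_m ≠ 0`. -/
def gradYvar (x : Fin n → ℝ) (m : Fin ((n+1)/2)) : Fin n → ℝ :=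
  fun j => if (j : ℕ)/2 = m then (if 2 * (m : ℕ) + 1 < n then x j / yvar x m else 1) else 0

theorem gradYvar_of_ne {x : Fin n → ℝ} {m : Fin ((n+1)/2)} {j : Fin n} (hj : (j : ℕ)/2 ≠ m) :
    gradYvar x m j = 0 :=
  if_neg hj

theorem gradYvar_blockFst (x : Fin n → ℝ) (m : Fin ((n+1)/2)) (ℓ : Fin (n/2)) :
    gradYvar x m (blockFst ℓ) = if m = dIdx ℓ then x (blockFst ℓ) / yv x (dIdx ℓ) else 0 := by
  by_cases h : m = dIdx ℓ
  · subst h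
    simp [gradYvar, blockFst, dIdx, yv, two_mul_add_one_lt]
  · rw [if_neg h, gradYvar_of_ne]
    simpa [blockFst, dIdx, Fin.ext_iff, eq_comm] using h

theorem gradYvar_blockSnd (x : Fin n → ℝ) (m : Fin ((n+1)/2)) (ℓ : Fin (n/2)) :
    gradYvar x m (blockSnd ℓ) = if m = dIdx ℓ then x (blockSnd ℓ) / yv x (dIdx ℓ) else 0 := by
  have e : (2 * (ℓ : ℕ) + 1) / 2 = ℓ := by omega
  by_cases h : m = dIdx ℓ
  · subst h
    simp [gradYvar, blockSnd, dIdx, yv, e, two_mul_add_one_lt]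
  · rw [if_neg h, gradYvar_of_ne]
    simpa [blockSnd, dIdx, Fin.ext_iff, eq_comm, e] using h

theorem hasGradAt_yvar {x : Fin n → ℝ} {m : Fin ((n+1)/2)}
    (hm : 2 * (m : ℕ) + 1 < n → 0 < yvar x m) :
    HasGradAt (fun z => yvar z m) (gradYvar x m) x := by
  by_cases h : 2 * (m : ℕ) + 1 < n
  · set p : Fin n := ⟨2 * m, by omega⟩
    set q : Fin n := ⟨2 * m + 1, h⟩
    have hy := hm h
    have hS : x p ^ 2 + x q ^ 2 ≠ 0 := by rw [← sq_yvar h]; positivity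
    have hsqrt := (Real.hasDerivAt_sqrt hS).comp_hasGradAt
      (((hasDerivAt_pow 2 (x p)).comp_hasGradAt (g := fun z => z p) (hasGradAt_apply p x)).add
        ((hasDerivAt_pow 2 (x q)).comp_hasGradAt (g := fun z => z q) (hasGradAt_apply q x)))
    rw [← yvar_of_lt h] at hsqrt
    refine (hsqrt.congr_of_eventuallyEq (Eventually.of_forall fun z => yvar_of_lt h)).congr_grad ?_
    funext j
    have hp : (p : ℕ) / 2 = m := by simp [p]
    have hq : (q : ℕ) / 2 = m := by simp [q]; omega
    rcases eq_or_ne j p with rfl | hjp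
    · simp [gradYvar, hp, h, show p ≠ q by simp [p, q, Fin.ext_iff]]
      field_simp
    rcases eq_or_ne j q with rfl | hjq
    · simp [gradYvar, hq, h, hjp]
      field_simp
    have hj : (j : ℕ)/2 ≠ m := by
      simp only [ne_eq, Fin.ext_iff, p, q] at hjp hjq; omega
    simp [gradYvar, hj, hjp, hjq]
  · refine ((hasGradAt_apply (lastIdx m) x).congr_of_eventuallyEq
      (Eventually.of_forall fun z => yvar_of_not_lt h)).congr_grad ?_
    funext j
    have h1 : (n - 1) / 2 = (m : ℕ) := by have := m.isLt; omega
    by_cases hj : (j : ℕ)/2 = m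
    · have : j = lastIdx m := by simp [Fin.ext_iff, lastIdx]; omega
      subst this
      simp [gradYvar, h, h1, lastIdx]
    · simp [gradYvar, hj, Pi.single_apply]
      rintro rfl
      exact hj (by simpa [lastIdx] using h1)

theorem gradYvar_dotProduct_gradYvar {x : Fin n → ℝ} {m : Fin ((n+1)/2)}
    (hm : 2 * (m : ℕ) + 1 < n → 0 < yvar x m) (m' : Fin ((n+1)/2)) :
    gradYvar x m ⬝ᵥ gradYvar x m' = if m = m' then 1 else 0 := by
  split_ifs with hmm'
  · subst hmm'
    rw [dotProduct_eq_of_block_support (fun j => gradYvar_of_ne)]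
    split_ifs with h
    · have h1 : (2 * (m : ℕ) + 1) / 2 = m := by omega
      have hy := hm h
      simp only [gradYvar, Nat.mul_div_cancel_left _ two_pos, h1, if_true, if_pos h]
      field_simp
      rw [sq_yvar h]
    · have h1 : (n - 1) / 2 = (m : ℕ) := by have := m.isLt; omega
      simp [gradYvar, lastIdx, h1, h]
  · exact dotProduct_eq_zero_of_block_support (fun j => gradYvar_of_ne)
      (fun j => gradYvar_of_ne) hmm'

theorem wperp_dotProduct_gradYvar (x : Fin n → ℝ) (k m : Fin ((n+1)/2)) :
    wperp x k ⬝ᵥ gradYvar x m = 0 := by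
  by_cases hkm : k = m
  · subst hkm
    rw [dotProduct_eq_of_block_support (fun j => wperp_of_ne)]
    split_ifs with h
    · have h1 : (2 * (k : ℕ) + 1) / 2 = k := by omega
      simp [wperp, gradYvar, h1, h]
      ring
    · simp [wperp, h]
  · exact dotProduct_eq_zero_of_block_support (fun j => wperp_of_ne)
      (fun j => gradYvar_of_ne) hkm

/-- `Δ y_m = 1 / y_m` for a planar radius and `0` for the last coordinate. -/
theorem exists_hasGradAt_gradYvar {x : Fin n → ℝ} {m : Fin ((n+1)/2)}
    (hm : 2 * (m : ℕ) + 1 < n → 0 < yvar x m) :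
    ∃ D : Fin n → Fin n → ℝ, (∀ j, HasGradAt (fun z => gradYvar z m j) (D j) x) ∧
      ∑ j, D j j = if 2 * (m : ℕ) + 1 < n then (yvar x m)⁻¹ else 0 := by
  by_cases h : 2 * (m : ℕ) + 1 < n
  · have hy := hm h
    refine ⟨fun j => if (j : ℕ)/2 = m
      then (yvar x m)⁻¹ • Pi.single j 1 + (x j * -((yvar x m) ^ 2)⁻¹) • gradYvar x m
      else 0, fun j => ?_, ?_⟩
    · by_cases hj : (j : ℕ)/2 = m
      · simp only [gradYvar, hj, h, if_true, div_eq_mul_inv]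
        exact ((hasGradAt_apply j x).mul
          ((hasDerivAt_inv hy.ne').comp_hasGradAt (hasGradAt_yvar hm))).congr_grad (by
            simp [add_comm, smul_smul])
      · simp only [gradYvar, hj, if_false]
        exact hasGradAt_const 0 x
    · simp only [ite_apply, Pi.zero_apply]
      rw [if_pos h, sum_ite_div_two_eq, dif_pos h]
      have h1 : (2 * (m : ℕ) + 1) / 2 = m := by omega
      simp only [Pi.add_apply, Pi.smul_apply, smul_eq_mul, Pi.single_eq_same, gradYvar,
        Nat.mul_div_cancel_left _ two_pos, h1, if_true, if_pos h]
      field_simp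
      rw [sq_yvar h]
      ring
  · refine ⟨fun _ => 0, fun j => ?_, by simp [h]⟩
    simp only [gradYvar, h, if_false]
    exact hasGradAt_const _ x

theorem hasGradAt_comp_yv {x : Fin n → ℝ} (hx : PlanarPos n (yv x))
    {φ : (Fin ((n+1)/2) → ℝ) → ℝ} {a : Fin ((n+1)/2) → ℝ} (hφ : HasGradAt φ a (yv x)) :
    HasGradAt (fun z => φ (yv z)) (∑ m, a m • gradYvar x m) x :=
  hφ.comp fun m => hasGradAt_yvar (hx m)

theorem sum_smul_gradYvar_dotProduct {x : Fin n → ℝ} (hx : PlanarPos n (yv x))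
    (a b : Fin ((n+1)/2) → ℝ) :
    (∑ m, a m • gradYvar x m) ⬝ᵥ (∑ m, b m • gradYvar x m) = a ⬝ᵥ b := by
  simp only [sum_dotProduct, dotProduct_sum, smul_dotProduct, dotProduct_smul,
    gradYvar_dotProduct_gradYvar (hx _)]
  simp [dotProduct, mul_comm]

theorem gradx_comp_yv_dotProduct {x : Fin n → ℝ} (hx : PlanarPos n (yv x))
    {φ ψ : (Fin ((n+1)/2) → ℝ) → ℝ} (hφ : DifferentiableAt ℝ φ (yv x))
    (hψ : DifferentiableAt ℝ ψ (yv x)) :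
    gradx (fun z => φ (yv z)) x ⬝ᵥ gradx (fun z => ψ (yv z)) x
      = gradx φ (yv x) ⬝ᵥ gradx ψ (yv x) := by
  rw [(hasGradAt_comp_yv hx hφ.hasGradAt).gradx_eq, (hasGradAt_comp_yv hx hψ.hasGradAt).gradx_eq,
    sum_smul_gradYvar_dotProduct hx]

theorem gradx_comp_yv_dotProduct_wperp {x : Fin n → ℝ} (hx : PlanarPos n (yv x))
    {φ : (Fin ((n+1)/2) → ℝ) → ℝ} (hφ : DifferentiableAt ℝ φ (yv x)) (k : Fin ((n+1)/2)) :
    wperp x k ⬝ᵥ gradx (fun z => φ (yv z)) x = 0 := by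
  simp [(hasGradAt_comp_yv hx hφ.hasGradAt).gradx_eq, dotProduct_sum, wperp_dotProduct_gradYvar]

theorem pdx_comp_yv_blockFst {x : Fin n → ℝ} (hx : PlanarPos n (yv x))
    {φ : (Fin ((n+1)/2) → ℝ) → ℝ} (hφ : DifferentiableAt ℝ φ (yv x)) (ℓ : Fin (n/2)) :
    pdx (fun z => φ (yv z)) x (blockFst ℓ)
      = pdx φ (yv x) (dIdx ℓ) * x (blockFst ℓ) / yv x (dIdx ℓ) := by
  rw [(hasGradAt_comp_yv hx hφ.hasGradAt).pdx_eq]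
  simp [Finset.sum_apply, gradYvar_blockFst, gradx, mul_div_assoc]

theorem pdx_comp_yv_blockSnd {x : Fin n → ℝ} (hx : PlanarPos n (yv x))
    {φ : (Fin ((n+1)/2) → ℝ) → ℝ} (hφ : DifferentiableAt ℝ φ (yv x)) (ℓ : Fin (n/2)) :
    pdx (fun z => φ (yv z)) x (blockSnd ℓ)
      = pdx φ (yv x) (dIdx ℓ) * x (blockSnd ℓ) / yv x (dIdx ℓ) := by
  rw [(hasGradAt_comp_yv hx hφ.hasGradAt).pdx_eq]
  simp [Finset.sum_apply, gradYvar_blockSnd, gradx, mul_div_assoc]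

/-- The Laplacian of `x ↦ φ (yv x)`, written in the radial variables `y`. -/
def yLaplacian (n : ℕ) (φ : (Fin ((n+1)/2) → ℝ) → ℝ) (y : Fin ((n+1)/2) → ℝ) : ℝ :=
  lapx φ y + ∑ m : Fin ((n+1)/2), if 2 * (m : ℕ) + 1 < n then pdx φ y m / y m else 0

theorem lapx_comp_yv {x : Fin n → ℝ} (hx : PlanarPos n (yv x))
    {φ : (Fin ((n+1)/2) → ℝ) → ℝ} (hφ : ContDiffAt ℝ 2 φ (yv x)) :
    lapx (fun z => φ (yv z)) x = yLaplacian n φ (yv x) := by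
  choose D hD htr using fun m => exists_hasGradAt_gradYvar (hx m)
  have hG : ∀ᶠ z in 𝓝 x, HasGradAt (fun z => φ (yv z))
      (fun j => ∑ m, pdx φ (yv z) m * gradYvar z m j) z := by
    filter_upwards [eventually_yvar_pos hx,
      continuous_yv.continuousAt.eventually hφ.eventually_differentiableAt] with z hz hφz
    exact (hasGradAt_comp_yv hz hφz.hasGradAt).congr_grad (funext fun j => by
      simp [Finset.sum_apply, gradx])
  rw [lapx_eq_of_hasGradAt hG fun j => HasGradAt.sum Finset.univ fun m _ =>
    (hasGradAt_comp_yv hx (hφ.differentiableAt_pdx m).hasGradAt).mul (hD m j)]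
  simp only [Finset.sum_apply, Pi.add_apply, Pi.smul_apply, smul_eq_mul, Finset.sum_add_distrib]
  rw [add_comm, yLaplacian]
  congr 1
  · simp_rw [Finset.mul_sum]
    rw [Finset.sum_comm]
    refine Finset.sum_congr rfl fun m _ => ?_
    rw [Finset.sum_comm]
    simp_rw [mul_left_comm (gradYvar x m _), ← Finset.mul_sum]
    have hdot : ∀ m', ∑ i, gradYvar x m i * gradYvar x m' i = if m = m' then 1 else 0 :=
      gradYvar_dotProduct_gradYvar (hx m)
    simp [hdot, gradx]
  · rw [Finset.sum_comm]
    simp_rw [← Finset.mul_sum, htr]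
    refine Finset.sum_congr rfl fun m _ => ?_
    split_ifs
    · rw [div_eq_mul_inv]; rfl
    · rw [mul_zero]

end RadialVariables

section WhirlMap

open Real

variable {n : ℕ}

theorem Qf_rows (f : (Fin ((n+1)/2) → ℝ) → Fin (n/2) → ℝ) (y : Fin ((n+1)/2) → ℝ) :
    (∀ ℓ, Qf f y (blockFst ℓ) = cos (f y ℓ) • Pi.single (blockFst ℓ) 1
      - sin (f y ℓ) • Pi.single (blockSnd ℓ) 1) ∧
    (∀ ℓ, Qf f y (blockSnd ℓ) = sin (f y ℓ) • Pi.single (blockFst ℓ) 1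
      + cos (f y ℓ) • Pi.single (blockSnd ℓ) 1) ∧
    (∀ i : Fin n, 2 * (n/2) ≤ (i : ℕ) → Qf f y i = Pi.single i 1) := by
  have e : ∀ a : ℕ, (2 * a + 1) / 2 = a := by omega
  refine ⟨fun ℓ => ?_, fun ℓ => ?_, fun i hi => ?_⟩ <;> funext j <;>
  rcases block_cases j with ⟨ℓ', rfl⟩ | ⟨ℓ', rfl⟩ | hj <;>
  simp only [Qf, blockFst, blockSnd, of_apply, Pi.add_apply, Pi.sub_apply, Pi.smul_apply,
    Pi.single_apply, Fin.ext_iff, smul_eq_mul, e, Nat.mul_div_cancel_left _ two_pos, Fin.eta] <;>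
  split_ifs <;> first | omega | simp

theorem Qf_transpose_mul_self (f : (Fin ((n+1)/2) → ℝ) → Fin (n/2) → ℝ)
    (y : Fin ((n+1)/2) → ℝ) : (Qf f y)ᵀ * Qf f y = 1 := by
  obtain ⟨hF, hS, hT⟩ := Qf_rows f y
  rw [mul_eq_one_comm]
  ext i k
  change Qf f y i ⬝ᵥ Qf f y k = (1 : Matrix (Fin n) (Fin n) ℝ) i k
  rcases block_cases i with ⟨ℓ, rfl⟩ | ⟨ℓ, rfl⟩ | hi <;>
  rcases block_cases k with ⟨ℓ', rfl⟩ | ⟨ℓ', rfl⟩ | hk <;>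
  simp (disch := assumption) only [hF, hS, hT] <;>
  simp [Matrix.one_apply, Pi.single_apply, dotProduct_add, dotProduct_sub,
    eq_comm (a := blockSnd _) (b := blockFst _), ne_blockFst_of_le, ne_blockSnd_of_le,
    (ne_blockFst_of_le _ _).symm, (ne_blockSnd_of_le _ _).symm, *] <;>
  split_ifs <;> subst_vars <;> first
  | contradiction
  | ring1
  | (simp only [← sq]; first | exact cos_sq_add_sin_sq _ | exact sin_sq_add_cos_sq _)

theorem Qf_mulVec_blockFst (f : (Fin ((n+1)/2) → ℝ) → Fin (n/2) → ℝ)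
    (y : Fin ((n+1)/2) → ℝ) (v : Fin n → ℝ) (ℓ : Fin (n/2)) :
    (Qf f y *ᵥ v) (blockFst ℓ) = cos (f y ℓ) * v (blockFst ℓ) - sin (f y ℓ) * v (blockSnd ℓ) := by
  change Qf f y (blockFst ℓ) ⬝ᵥ v = _
  simp [(Qf_rows f y).1 ℓ, sub_dotProduct]

theorem Qf_mulVec_blockSnd (f : (Fin ((n+1)/2) → ℝ) → Fin (n/2) → ℝ)
    (y : Fin ((n+1)/2) → ℝ) (v : Fin n → ℝ) (ℓ : Fin (n/2)) :
    (Qf f y *ᵥ v) (blockSnd ℓ) = sin (f y ℓ) * v (blockFst ℓ) + cos (f y ℓ) * v (blockSnd ℓ) := by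
  change Qf f y (blockSnd ℓ) ⬝ᵥ v = _
  simp [(Qf_rows f y).2.1 ℓ, add_dotProduct]

theorem Qf_mulVec_of_le (f : (Fin ((n+1)/2) → ℝ) → Fin (n/2) → ℝ)
    (y : Fin ((n+1)/2) → ℝ) (v : Fin n → ℝ) {i : Fin n} (hi : 2 * (n/2) ≤ (i : ℕ)) :
    (Qf f y *ᵥ v) i = v i := by
  change Qf f y i ⬝ᵥ v = _
  simp [(Qf_rows f y).2.2 i hi]

variable {f : (Fin ((n+1)/2) → ℝ) → Fin (n/2) → ℝ} {u : (Fin n → ℝ) → Fin n → ℝ}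

theorem whirl_blockFst (hu : ∀ z, u z = Qf f (yv z) *ᵥ z) (ℓ : Fin (n/2)) :
    (fun z => u z (blockFst ℓ))
      = fun z => cos (f (yv z) ℓ) * z (blockFst ℓ) - sin (f (yv z) ℓ) * z (blockSnd ℓ) :=
  funext fun z => by rw [hu, Qf_mulVec_blockFst]

/-- Written in the shape of the first row, so that the rotated-coordinate lemmas cover both. -/
theorem whirl_blockSnd (hu : ∀ z, u z = Qf f (yv z) *ᵥ z) (ℓ : Fin (n/2)) :
    (fun z => u z (blockSnd ℓ))
      = fun z => cos (f (yv z) ℓ - π / 2) * z (blockFst ℓ)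
          - sin (f (yv z) ℓ - π / 2) * z (blockSnd ℓ) :=
  funext fun z => by rw [hu, Qf_mulVec_blockSnd, cos_sub_pi_div_two, sin_sub_pi_div_two]; ring

theorem whirl_of_le (hu : ∀ z, u z = Qf f (yv z) *ᵥ z) {i : Fin n} (hi : 2 * (n/2) ≤ (i : ℕ)) :
    (fun z => u z i) = fun z => z i :=
  funext fun z => by rw [hu, Qf_mulVec_of_le _ _ _ hi]

theorem norm2_whirl (hu : ∀ z, u z = Qf f (yv z) *ᵥ z) (x : Fin n → ℝ) :
    norm2 (u x) = norm2 x := by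
  rw [hu, norm2_mulVec_of_transpose_mul_self (Qf_transpose_mul_self f _)]

theorem gradm_whirl (hu : ∀ z, u z = Qf f (yv z) *ᵥ z) {x : Fin n → ℝ}
    (hθ : ∀ ℓ, DifferentiableAt ℝ (fun z => f (yv z) ℓ) x) :
    gradm u x = Qf f (yv x)
      * (1 + ∑ ℓ, vecMulVec (wperp x (dIdx ℓ)) (gradx (fun z => f (yv z) ℓ) x)) := by
  ext i k
  change pdx (fun z => u z i) x k = (Qf f (yv x) *ᵥ fun j => _) i
  rcases block_cases i with ⟨ℓ, rfl⟩ | ⟨ℓ, rfl⟩ | hi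
  · rw [whirl_blockFst hu, (hasGradAt_cos_mul_sub_sin_mul (hθ ℓ).hasGradAt _ _).pdx_eq,
      Qf_mulVec_blockFst]
    simp [Matrix.sum_apply, vecMulVec_apply, wperp_blockFst, wperp_blockSnd, one_apply,
      Pi.single_apply, ite_mul]
    simp only [eq_comm (a := blockFst ℓ), eq_comm (a := blockSnd ℓ)]
    split_ifs <;> ring
  · rw [whirl_blockSnd hu, (hasGradAt_cos_mul_sub_sin_mul
      ((hθ ℓ).hasGradAt.sub (hasGradAt_const (π / 2) x)) _ _).pdx_eq, Qf_mulVec_blockSnd]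
    simp [Matrix.sum_apply, vecMulVec_apply, wperp_blockFst, wperp_blockSnd, one_apply,
      Pi.single_apply, ite_mul]
    simp only [eq_comm (a := blockFst ℓ), eq_comm (a := blockSnd ℓ), cos_sub_pi_div_two,
      sin_sub_pi_div_two]
    split_ifs <;> ring
  · rw [whirl_of_le hu hi, (hasGradAt_apply i x).pdx_eq, Qf_mulVec_of_le _ _ _ hi]
    simp [Matrix.sum_apply, vecMulVec_apply, wperp_of_le _ _ hi, one_apply, Pi.single_apply,
      eq_comm]

theorem frob2_gradm_whirl (hu : ∀ z, u z = Qf f (yv z) *ᵥ z) {x : Fin n → ℝ}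
    (hx : PlanarPos n (yv x)) (hf : ∀ ℓ, DifferentiableAt ℝ (fun y => f y ℓ) (yv x)) :
    frob2 (gradm u x) = xiArg n f (yv x) := by
  have hθ : ∀ ℓ, DifferentiableAt ℝ (fun z => f (yv z) ℓ) x :=
    fun ℓ => (hf ℓ).comp x ((contDiffAt_yv hx (k := 1)).differentiableAt (by norm_num))
  rw [gradm_whirl hu hθ, frob2_mul_of_transpose_mul_self (Qf_transpose_mul_self f _),
    frob2_one_add_sum_vecMulVec _ _ (fun ℓ => gradx_comp_yv_dotProduct_wperp hx (hf ℓ) _)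
      fun ℓ ℓ' h => by simp [wperp_dotProduct_wperp _ _ _ (two_mul_dIdx_add_one_lt ℓ), h]]
  simp only [xiArg, wperp_dotProduct_wperp _ _ _ (two_mul_dIdx_add_one_lt _), if_true,
    gradx_comp_yv_dotProduct hx (hf _) (hf _)]
  simp [norm2, dotProduct, pow_two, yv]

theorem whirl_coeff_args (hu : ∀ z, u z = Qf f (yv z) *ᵥ z) {x : Fin n → ℝ}
    (hx : PlanarPos n (yv x)) (hf : ∀ ℓ, DifferentiableAt ℝ (fun y => f y ℓ) (yv x)) (F : ℝ → ℝ → ℝ → ℝ) :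
    F (enr x) (norm2 (u x)) (frob2 (gradm u x))
      = F (enr (yv x)) (enr (yv x) ^ 2) (xiArg n f (yv x)) := by
  rw [enr_yv, norm2_whirl hu, frob2_gradm_whirl hu hx hf, enr, Real.sq_sqrt]
  unfold norm2; positivity

/-- The term `2 ∂_ℓ f_ℓ / y_ℓ` is the cross term of the product rule: inside its block,
`∇(f_ℓ ∘ y)` is the multiple `(∂_ℓ f_ℓ / y_ℓ) w^ℓ` of the radial direction. -/
theorem lapv_whirl (hu : ∀ z, u z = Qf f (yv z) *ᵥ z) {x : Fin n → ℝ} (hx : PlanarPos n (yv x))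
    (hf : ∀ ℓ, ContDiffAt ℝ 2 (fun y => f y ℓ) (yv x)) :
    lapv u x = Qf f (yv x) *ᵥ ∑ ℓ,
      ((yLaplacian n (fun y => f y ℓ) (yv x)
          + 2 * pdx (fun y => f y ℓ) (yv x) (dIdx ℓ) / yv x (dIdx ℓ)) • wperp x (dIdx ℓ)
        - norm2 (gradx (fun y => f y ℓ) (yv x)) • wv x (dIdx ℓ)) := by
  have hθ : ∀ ℓ, ContDiffAt ℝ 2 (fun z => f (yv z) ℓ) x :=
    fun ℓ => (hf ℓ).comp x (contDiffAt_yv hx)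
  have hnorm : ∀ ℓ, gradx (fun z => f (yv z) ℓ) x ⬝ᵥ gradx (fun z => f (yv z) ℓ) x
      = norm2 (gradx (fun y => f y ℓ) (yv x)) := fun ℓ => by
    rw [gradx_comp_yv_dotProduct hx ((hf ℓ).differentiableAt (by norm_num))
      ((hf ℓ).differentiableAt (by norm_num)), norm2, dotProduct]
    simp [pow_two]
  have hy : ∀ ℓ : Fin (n/2), 0 < yv x (dIdx ℓ) := fun ℓ => hx _ (two_mul_add_one_lt ℓ)
  funext i
  change lapx (fun z => u z i) x = _
  rcases block_cases i with ⟨ℓ, rfl⟩ | ⟨ℓ, rfl⟩ | hi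
  · rw [whirl_blockFst hu, lapx_cos_mul_sub_sin_mul (hθ ℓ), Qf_mulVec_blockFst,
      lapx_comp_yv hx (hf ℓ), hnorm,
      pdx_comp_yv_blockFst hx ((hf ℓ).differentiableAt (by norm_num)),
      pdx_comp_yv_blockSnd hx ((hf ℓ).differentiableAt (by norm_num))]
    simp [Finset.sum_apply, wperp_blockFst, wperp_blockSnd, wv_blockFst, wv_blockSnd]
    have := hy ℓ
    field_simp
    ring
  · rw [whirl_blockSnd hu, lapx_cos_mul_sub_sin_mul ((hθ ℓ).sub contDiffAt_const),
      Qf_mulVec_blockSnd, lapx_sub_const, gradx_sub_const, pdx_sub_const, pdx_sub_const,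
      lapx_comp_yv hx (hf ℓ), hnorm,
      pdx_comp_yv_blockFst hx ((hf ℓ).differentiableAt (by norm_num)),
      pdx_comp_yv_blockSnd hx ((hf ℓ).differentiableAt (by norm_num))]
    simp [Finset.sum_apply, wperp_blockFst, wperp_blockSnd, wv_blockFst, wv_blockSnd,
      cos_sub_pi_div_two, sin_sub_pi_div_two]
    have := hy ℓ
    field_simp
    ring
  · rw [whirl_of_le hu hi, lapx_apply, Qf_mulVec_of_le _ _ _ hi]
    simp [Finset.sum_apply, wperp_of_le _ _ hi, wv_dIdx_of_le _ _ hi]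

theorem LAB_whirl {A B : ℝ → ℝ → ℝ → ℝ} (hu : ∀ z, u z = Qf f (yv z) *ᵥ z) {x : Fin n → ℝ}
    (hx : PlanarPos n (yv x)) (hf : ∀ ℓ, ContDiffAt ℝ 2 (fun y => f y ℓ) (yv x)) {α β : ℝ}
    (hα : A (enr x) (norm2 (u x)) (frob2 (gradm u x)) = α)
    (hβ : B (enr x) (norm2 (u x)) (frob2 (gradm u x)) = β)
    (hperp : ∀ ℓ, wperp x (dIdx ℓ)
      ⬝ᵥ gradx (fun z => A (enr z) (norm2 (u z)) (frob2 (gradm u z))) x = 0)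
    (hpde : ∀ ℓ, gradx (fun z => f (yv z) ℓ) x
        ⬝ᵥ gradx (fun z => A (enr z) (norm2 (u z)) (frob2 (gradm u z))) x
      + α * (yLaplacian n (fun y => f y ℓ) (yv x)
          + 2 * pdx (fun y => f y ℓ) (yv x) (dIdx ℓ) / yv x (dIdx ℓ)) = 0) :
    LAB A B u x = gradx (fun z => A (enr z) (norm2 (u z)) (frob2 (gradm u z))) x + β • x
      - ∑ ℓ, (α * norm2 (gradx (fun y => f y ℓ) (yv x))) • wv x (dIdx ℓ) := by
  set g := gradx (fun z => A (enr z) (norm2 (u z)) (frob2 (gradm u z))) x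
  have hθ : ∀ ℓ, DifferentiableAt ℝ (fun z => f (yv z) ℓ) x := fun ℓ =>
    ((hf ℓ).comp x (contDiffAt_yv hx)).differentiableAt (by norm_num)
  have hinner : g + ∑ ℓ, (gradx (fun z => f (yv z) ℓ) x ⬝ᵥ g) • wperp x (dIdx ℓ)
      + α • ∑ ℓ, ((yLaplacian n (fun y => f y ℓ) (yv x)
          + 2 * pdx (fun y => f y ℓ) (yv x) (dIdx ℓ) / yv x (dIdx ℓ)) • wperp x (dIdx ℓ)
        - norm2 (gradx (fun y => f y ℓ) (yv x)) • wv x (dIdx ℓ)) + β • x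
      = g + β • x - ∑ ℓ, (α * norm2 (gradx (fun y => f y ℓ) (yv x))) • wv x (dIdx ℓ) := by
    funext j
    simp only [Pi.add_apply, Pi.sub_apply, Pi.smul_apply, Finset.sum_apply, smul_eq_mul,
      Finset.mul_sum]
    have hs := Finset.sum_congr rfl fun ℓ (_ : ℓ ∈ Finset.univ) =>
      show (gradx (fun z => f (yv z) ℓ) x ⬝ᵥ g) * wperp x (dIdx ℓ) j
        + α * ((yLaplacian n (fun y => f y ℓ) (yv x)
          + 2 * pdx (fun y => f y ℓ) (yv x) (dIdx ℓ) / yv x (dIdx ℓ)) * wperp x (dIdx ℓ) j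
          - norm2 (gradx (fun y => f y ℓ) (yv x)) * wv x (dIdx ℓ) j)
        = -(α * norm2 (gradx (fun y => f y ℓ) (yv x)) * wv x (dIdx ℓ) j) by
      linear_combination wperp x (dIdx ℓ) j * hpde ℓ
    rw [Finset.sum_add_distrib, Finset.sum_neg_distrib] at hs
    linarith
  rw [LAB, hα, hβ, gradm_whirl hu hθ, lapv_whirl hu hx hf, hu x,
    transpose_mul_mulVec_of_transpose_mul_self (Qf_transpose_mul_self f _),
    one_add_sum_vecMulVec_mulVec, hinner, one_add_sum_vecMulVec_transpose_mulVec]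
  simp [dotProduct_add, dotProduct_sub, dotProduct_sum, hperp, wperp_dotProduct_self,
    wperp_dotProduct_wv]

end WhirlMap

section AuxiliarySystem

variable {n : ℕ}

def Acoef (n : ℕ) (A : ℝ → ℝ → ℝ → ℝ) (f : (Fin ((n+1)/2) → ℝ) → Fin (n/2) → ℝ)
    (y : Fin ((n+1)/2) → ℝ) : ℝ :=
  A (enr y) (enr y ^ 2) (xiArg n f y)

theorem hasGradAt_Jac {y : Fin ((n+1)/2) → ℝ} (hy : PlanarPos n y) :
    HasGradAt (Jac n) (fun k => if 2 * (k : ℕ) + 1 < n then Jac n y / y k else 0) y := by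
  classical
  have hg : ∀ m ∈ (Finset.univ : Finset (Fin ((n+1)/2))),
      HasFDerivAt (fun w : Fin ((n+1)/2) → ℝ => if 2 * (m : ℕ) + 1 < n then w m else 1)
      (if 2 * (m : ℕ) + 1 < n then (ContinuousLinearMap.proj m : (Fin ((n+1)/2) → ℝ) →L[ℝ] ℝ)
        else 0) y := fun m _ => by
    split_ifs
    · exact (ContinuousLinearMap.proj m : (Fin ((n+1)/2) → ℝ) →L[ℝ] ℝ).hasFDerivAt
    · exact hasFDerivAt_const _ _
  refine (HasFDerivAt.finsetProd hg).hasGradAt fun k => ?_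
  rw [_root_.sum_apply, Finset.sum_eq_single k]
  · split_ifs with hk
    · have hJ : Jac n y = y k * ∏ j ∈ Finset.univ.erase k,
          (if 2 * (j : ℕ) + 1 < n then y j else 1) := by
        rw [Jac, ← Finset.mul_prod_erase _ _ (Finset.mem_univ k), if_pos hk]
      rw [hJ, mul_div_cancel_left₀ _ (hy k hk).ne']
      simp
    · simp
  · intro m _ hmk
    split_ifs <;> simp [hmk]
  · simp

theorem Jac_pos {y : Fin ((n+1)/2) → ℝ} (hy : PlanarPos n y) : 0 < Jac n y :=
  Finset.prod_pos fun m _ => by split_ifs with h; exacts [hy m h, one_pos]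

theorem divA_eq {A : ℝ → ℝ → ℝ → ℝ} {f : (Fin ((n+1)/2) → ℝ) → Fin (n/2) → ℝ}
    {y : Fin ((n+1)/2) → ℝ} (hy : PlanarPos n y)
    (ha : DifferentiableAt ℝ (Acoef n A f) y) {i : Fin (n/2)}
    (hf : ContDiffAt ℝ 2 (fun w => f w i) y) :
    divA n A f i y = y (dIdx i) ^ 2 * Jac n y
      * (Acoef n A f y * (yLaplacian n (fun w => f w i) y
          + 2 * pdx (fun w => f w i) y (dIdx i) / y (dIdx i))
        + gradx (Acoef n A f) y ⬝ᵥ gradx (fun w => f w i) y) := by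
  have hyi := hy _ (two_mul_dIdx_add_one_lt i)
  have hcoef : HasGradAt (coefA n A f i) (fun k => y (dIdx i) ^ 2 * Jac n y
      * (Acoef n A f y * (if 2 * (k : ℕ) + 1 < n then 1 / y k else 0) + gradx (Acoef n A f) y k)
      + 2 * y (dIdx i) * Jac n y * Acoef n A f y * (if k = dIdx i then 1 else 0)) y :=
    ((((hasDerivAt_pow 2 _).comp_hasGradAt (g := fun z => z (dIdx i))
      (hasGradAt_apply _ y)).mul ha.hasGradAt).mul (hasGradAt_Jac hy)).congr_grad
      (funext fun k => by
        simp only [Pi.add_apply, Pi.smul_apply, smul_eq_mul, Pi.single_apply]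
        split_ifs <;> ring)
  have hstep : ∀ k, pdx (fun z => coefA n A f i z * pdx (fun w => f w i) z k) y k
      = coefA n A f i y * gradx (fun z => pdx (fun w => f w i) z k) y k
        + pdx (fun w => f w i) y k * _ :=
    fun k => (hcoef.mul (hf.differentiableAt_pdx k).hasGradAt).pdx_eq k
  rw [divA, Finset.sum_congr rfl fun k _ => hstep k]
  simp only [Finset.sum_add_distrib, mul_add, mul_ite, mul_zero, mul_one, Finset.sum_ite_eq',
    Finset.mem_univ, if_true, ← Finset.mul_sum, yLaplacian, lapx, dotProduct, coefA, Acoef, gradx]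
  have h2 : ∀ k : Fin ((n+1)/2), (if 2 * (k : ℕ) + 1 < n then pdx (fun w => f w i) y k
        * (y (dIdx i) ^ 2 * Jac n y * (A (enr y) (enr y ^ 2) (xiArg n f y) * (1 / y k))) else 0)
      = y (dIdx i) ^ 2 * Jac n y * A (enr y) (enr y ^ 2) (xiArg n f y)
        * (if 2 * (k : ℕ) + 1 < n then pdx (fun w => f w i) y k / y k else 0) := fun k => by
    split_ifs <;> ring
  have h3 : ∀ k, pdx (fun w => f w i) y k * (y (dIdx i) ^ 2 * Jac n y * pdx (Acoef n A f) y k)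
      = y (dIdx i) ^ 2 * Jac n y * (pdx (Acoef n A f) y k * pdx (fun w => f w i) y k) :=
    fun k => by ring
  simp only [h2, h3, ← Finset.mul_sum]
  field_simp
  ring

theorem continuous_enr {m : ℕ} : Continuous (enr : (Fin m → ℝ) → ℝ) := by
  unfold enr norm2; fun_prop

theorem isOpen_Ann (n : ℕ) (a b : ℝ) : IsOpen (Ann n a b) := by
  have hpos : IsOpen {y : Fin ((n+1)/2) → ℝ | PlanarPos n y} := by
    simp only [PlanarPos, Set.ofPred_forall]
    refine isOpen_iInter_of_finite fun m => ?_
    by_cases h : 2 * (m : ℕ) + 1 < n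
    · simpa [h] using isOpen_lt continuous_const (continuous_apply m)
    · simp [h]
  have : Ann n a b = {y | a < enr y} ∩ {y | enr y < b}
      ∩ {y | PlanarPos n y} := by
    ext y; simp [Ann, PlanarPos, and_assoc]
  rw [this]
  exact ((isOpen_lt continuous_const continuous_enr).inter
    (isOpen_lt continuous_enr continuous_const)).inter hpos

theorem ContDiffOn.contDiffAt_of_mem_Ann {a b : ℝ} {g : (Fin ((n+1)/2) → ℝ) → ℝ}
    {k : WithTop ℕ∞} (hg : ContDiffOn ℝ k g (closure (Ann n a b))) {y : Fin ((n+1)/2) → ℝ}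
    (hy : y ∈ Ann n a b) : ContDiffAt ℝ k g y :=
  hg.contDiffAt (Filter.mem_of_superset ((isOpen_Ann n a b).mem_nhds hy) subset_closure)

theorem differentiableAt_Acoef {a b : ℝ} (hn : 2 ≤ n) (ha : 0 < a) {A : ℝ → ℝ → ℝ → ℝ}
    (hA : ContDiffOn ℝ 1 (fun p : ℝ × ℝ × ℝ => A p.1 p.2.1 p.2.2)
      (Set.Icc a b ×ˢ Set.Ioi 0 ×ˢ Set.Ioi 0))
    {f : (Fin ((n+1)/2) → ℝ) → Fin (n/2) → ℝ} {y : Fin ((n+1)/2) → ℝ} (hy : y ∈ Ann n a b)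
    (hf : ∀ i, ContDiffAt ℝ 2 (fun w => f w i) y) :
    DifferentiableAt ℝ (Acoef n A f) y := by
  have henr : 0 < enr y := ha.trans hy.1
  have hξ : 0 < xiArg n f y := by
    have : (2 : ℝ) ≤ n := by exact_mod_cast hn
    have : 0 ≤ ∑ j : Fin (n/2), y (dIdx j) ^ 2 * norm2 (gradx (fun z => f z j) y) :=
      Finset.sum_nonneg fun j _ => mul_nonneg (sq_nonneg _) (by unfold norm2; positivity)
    rw [xiArg]; linarith
  have hmem : Set.Icc a b ×ˢ Set.Ioi 0 ×ˢ Set.Ioi 0 ∈ 𝓝 (enr y, enr y ^ 2, xiArg n f y) :=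
    prod_mem_nhds (Icc_mem_nhds hy.1 hy.2.1)
      (prod_mem_nhds (Ioi_mem_nhds (by positivity)) (Ioi_mem_nhds hξ))
  have hnorm2 : norm2 y ≠ 0 := fun h => by simp [enr, h] at henr
  have hd_enr : DifferentiableAt ℝ (enr : (Fin ((n+1)/2) → ℝ) → ℝ) y := by
    unfold enr; exact DifferentiableAt.sqrt (by unfold norm2; fun_prop) hnorm2
  have hd_ξ : DifferentiableAt ℝ (xiArg n f) y := by
    unfold xiArg norm2
    have := fun j m => (hf j).differentiableAt_pdx m
    simp only [gradx]
    fun_prop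
  exact ((hA.contDiffAt hmem).differentiableAt one_ne_zero).comp y
    (hd_enr.prodMk ((hd_enr.pow 2).prodMk hd_ξ))

theorem gradx_A_whirl {a b : ℝ} (hn : 2 ≤ n) (ha : 0 < a) {A : ℝ → ℝ → ℝ → ℝ}
    (hA : ContDiffOn ℝ 1 (fun p : ℝ × ℝ × ℝ => A p.1 p.2.1 p.2.2)
      (Set.Icc a b ×ˢ Set.Ioi 0 ×ˢ Set.Ioi 0))
    {f : (Fin ((n+1)/2) → ℝ) → Fin (n/2) → ℝ}
    (hf : ∀ i, ContDiffOn ℝ 2 (fun y => f y i) (closure (Ann n a b)))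
    {u : (Fin n → ℝ) → Fin n → ℝ} (hu : ∀ z, u z = Qf f (yv z) *ᵥ z) {x : Fin n → ℝ}
    (hx : yv x ∈ Ann n a b) :
    gradx (fun z => A (enr z) (norm2 (u z)) (frob2 (gradm u z))) x
      = ∑ m, gradx (Acoef n A f) (yv x) m • gradYvar x m := by
  have hAcoef := differentiableAt_Acoef hn ha hA hx fun i => (hf i).contDiffAt_of_mem_Ann hx
  refine ((hasGradAt_comp_yv hx.2.2 hAcoef.hasGradAt).congr_of_eventuallyEq ?_).gradx_eq
  filter_upwards [continuous_yv.continuousAt.preimage_mem_nhds ((isOpen_Ann n a b).mem_nhds hx)]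
    with z hz
  exact whirl_coeff_args hu hz.2.2
    (fun i => ((hf i).contDiffAt_of_mem_Ann hz).differentiableAt (by norm_num)) A

theorem whirl_auxiliary_eq {a b : ℝ} (hn : 2 ≤ n) (ha : 0 < a) {A : ℝ → ℝ → ℝ → ℝ}
    (hA : ContDiffOn ℝ 1 (fun p : ℝ × ℝ × ℝ => A p.1 p.2.1 p.2.2)
      (Set.Icc a b ×ˢ Set.Ioi 0 ×ˢ Set.Ioi 0))
    {f : (Fin ((n+1)/2) → ℝ) → Fin (n/2) → ℝ} {x : Fin n → ℝ} (hx : yv x ∈ Ann n a b)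
    (hf : ∀ i, ContDiffAt ℝ 2 (fun y => f y i) (yv x)) (ℓ : Fin (n/2))
    (hpde : divA n A f ℓ (yv x) = 0) :
    gradx (fun z => f (yv z) ℓ) x ⬝ᵥ ∑ m, gradx (Acoef n A f) (yv x) m • gradYvar x m
      + Acoef n A f (yv x) * (yLaplacian n (fun y => f y ℓ) (yv x)
          + 2 * pdx (fun y => f y ℓ) (yv x) (dIdx ℓ) / yv x (dIdx ℓ)) = 0 := by
  rw [divA_eq hx.2.2 (differentiableAt_Acoef hn ha hA hx hf) (hf ℓ)] at hpde
  have hyJ : yv x (dIdx ℓ) ^ 2 * Jac n (yv x) ≠ 0 :=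
    mul_ne_zero (pow_ne_zero 2 (hx.2.2 _ (two_mul_dIdx_add_one_lt ℓ)).ne') (Jac_pos hx.2.2).ne'
  rw [(hasGradAt_comp_yv hx.2.2 ((hf ℓ).differentiableAt (by norm_num)).hasGradAt).gradx_eq,
    sum_smul_gradYvar_dotProduct hx.2.2, dotProduct_comm]
  linear_combination (mul_eq_zero.1 hpde).resolve_left hyJ

end AuxiliarySystem

end

theorem stmt12_general (n : ℕ) (hn : 2 ≤ n) (a b : ℝ) (ha : 0 < a)
    (A B : ℝ → ℝ → ℝ → ℝ)
    (hA : ContDiffOn ℝ 1 (fun p : ℝ × ℝ × ℝ => A p.1 p.2.1 p.2.2)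
        (Set.Icc a b ×ˢ Set.Ioi 0 ×ˢ Set.Ioi 0))
    (f : (Fin ((n+1)/2) → ℝ) → Fin (n/2) → ℝ)
    (hf : ∀ i, ContDiffOn ℝ 2 (fun y => f y i) (closure (Ann n a b)))
    (hpde : ∀ y ∈ Ann n a b, ∀ i, divA n A f i y = 0)
    (u : (Fin n → ℝ) → Fin n → ℝ)
    (hu : ∀ z, u z = Qf f (yv z) *ᵥ z)
    (x : Fin n → ℝ) (hx : yv x ∈ Ann n a b) :
    let y0 := yv x
    LAB A B u x
      = gradx (fun z => A (enr z) (norm2 (u z)) (frob2 (gradm u z))) x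
        + B (enr y0) ((enr y0)^2) (xiArg n f y0) • x
        - ∑ i : Fin (n/2),
            (A (enr y0) ((enr y0)^2) (xiArg n f y0)
              * norm2 (gradx (fun w => f w i) y0)) • wv x (dIdx i) := by
  intro y0
  have hf2 : ∀ i, ContDiffAt ℝ 2 (fun y => f y i) y0 := fun i => (hf i).contDiffAt_of_mem_Ann hx
  have hf1 : ∀ i, DifferentiableAt ℝ (fun y => f y i) y0 :=
    fun i => (hf2 i).differentiableAt (by norm_num)
  have hgrad := gradx_A_whirl hn ha hA hf hu hx
  refine LAB_whirl hu hx.2.2 hf2 (whirl_coeff_args hu hx.2.2 hf1 A)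
    (whirl_coeff_args hu hx.2.2 hf1 B) (fun ℓ => ?_) (fun ℓ => ?_)
  · simp [hgrad, dotProduct_sum, wperp_dotProduct_gradYvar]
  · rw [hgrad]
    exact whirl_auxiliary_eq hn ha hA hx hf2 ℓ (hpde _ hx ℓ)

/-- Proposition 4.4: if `f` of class `C²` solves the unconstrained
auxiliary system, then for the whirl map `u` associated with `Q = Q[f]`,
`𝓛[u;A,B] = ∇A + Bx − Σ_i A|∇f_i|² w^i`, with `A, B` evaluated at
`(r,s,ξ) = (‖y‖, ‖y‖², n + Σ_j y_j²|∇f_j|²)`. -/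
theorem stmt12 (n : ℕ) (hn : 2 ≤ n) (a b : ℝ) (ha : 0 < a) (hab : a < b)
    (A B : ℝ → ℝ → ℝ → ℝ)
    (hA : ContDiffOn ℝ 1 (fun p : ℝ × ℝ × ℝ => A p.1 p.2.1 p.2.2)
        (Set.Icc a b ×ˢ Set.Ioi 0 ×ˢ Set.Ioi 0))
    (hB : ContDiffOn ℝ 1 (fun p : ℝ × ℝ × ℝ => B p.1 p.2.1 p.2.2)
        (Set.Icc a b ×ˢ Set.Ioi 0 ×ˢ Set.Ioi 0))
    (f : (Fin ((n+1)/2) → ℝ) → Fin (n/2) → ℝ)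
    (hf : ∀ i, ContDiffOn ℝ 2 (fun y => f y i) (closure (Ann n a b)))
    (hpde : ∀ y ∈ Ann n a b, ∀ i, divA n A f i y = 0)
    (u : (Fin n → ℝ) → Fin n → ℝ)
    (hu : ∀ z, u z = Qf f (yv z) *ᵥ z)
    (x : Fin n → ℝ) (hx : yv x ∈ Ann n a b) :
    let y0 := yv x
    LAB A B u x
      = gradx (fun z => A (enr z) (norm2 (u z)) (frob2 (gradm u z))) x
        + B (enr y0) ((enr y0)^2) (xiArg n f y0) • x
        - ∑ i : Fin (n/2),
            (A (enr y0) ((enr y0)^2) (xiArg n f y0)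
              * norm2 (gradx (fun w => f w i) y0)) • wv x (dIdx i) :=
  stmt12_general n hn a b ha A B hA f hf hpde u hu x hx
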